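/- arXiv:1911.12178 — 3 statements merged into one kernel-verified Lean document; each statement's English description precedes it below -/
import Mathlib

section
/- For square matrices L and ΔL with ‖L‖ ≤ 1−γ and ‖L+ΔL‖ ≤ 1−γ for some γ ∈ (0,1), the infinite series ∑_{t=0}^∞ ‖(L+ΔL)^t − L^t‖ converges and is at most γ^(−2)·‖ΔL‖. -/
/-- For operators `L, ΔL` on `ℝ^n` with `‖L‖ ≤ 1 - γ` and
`‖L + ΔL‖ ≤ 1 - γ`, `γ ∈ (0,1)`, the series `∑_{t≥0} ‖(L+ΔL)^t - L^t‖`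
converges and is at most `γ⁻² ‖ΔL‖`. -/
theorem stmt1 (n : ℕ) (γ : ℝ) (hγ0 : 0 < γ) (hγ1 : γ < 1)
    (L ΔL : EuclideanSpace ℝ (Fin n) →L[ℝ] EuclideanSpace ℝ (Fin n))
    (hL : ‖L‖ ≤ 1 - γ) (hLΔ : ‖L + ΔL‖ ≤ 1 - γ) :
    Summable (fun t : ℕ => ‖(L + ΔL) ^ t - L ^ t‖) ∧
      ∑' t : ℕ, ‖(L + ΔL) ^ t - L ^ t‖ ≤ γ ^ (-2 : ℤ) * ‖ΔL‖ := by
  set A := L + ΔL with hA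
  set r : ℝ := 1 - γ with hrdef
  have hr0 : 0 ≤ r := by simp [hrdef]; linarith
  have hr1 : r < 1 := by simp [hrdef]; linarith
  have hAB : A - L = ΔL := add_sub_cancel_left L ΔL
  have hc : (0:ℝ) ≤ ‖ΔL‖ := norm_nonneg _
  -- key termwise bound
  have key : ∀ t : ℕ, ‖A ^ t - L ^ t‖ ≤ (t : ℝ) * r ^ (t - 1) * ‖ΔL‖ := by
    intro t
    induction t with
    | zero => simp only [pow_zero, sub_self, norm_zero, Nat.cast_zero, zero_mul]; exact le_refl 0
    | succ t ih =>
      have h1 : A ^ (t + 1) - L ^ (t + 1) = A * (A ^ t - L ^ t) + ΔL * L ^ t := by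
        rw [← hAB, pow_succ', pow_succ', mul_sub, sub_mul]
        abel
      have hLt : ∀ s : ℕ, ‖L ^ s‖ ≤ r ^ s := by
        intro s
        induction s with
        | zero =>
          rw [pow_zero, pow_zero, ContinuousLinearMap.one_def]
          exact ContinuousLinearMap.norm_id_le
        | succ s ihs =>
          rw [pow_succ, pow_succ]
          exact le_trans (norm_mul_le _ _)
            (mul_le_mul ihs hL (norm_nonneg _) (pow_nonneg hr0 s))
      have hstep : (t : ℝ) * r ^ (t - 1) * r ≤ (t : ℝ) * r ^ t := by
        cases t with
        | zero => simp only [Nat.cast_zero, zero_mul]; exact le_refl 0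
        | succ s =>
          simp only [Nat.add_sub_cancel]
          rw [mul_assoc, ← pow_succ]
      calc ‖A ^ (t + 1) - L ^ (t + 1)‖
          ≤ ‖A * (A ^ t - L ^ t)‖ + ‖ΔL * L ^ t‖ := by rw [h1]; exact norm_add_le _ _
        _ ≤ ‖A‖ * ‖A ^ t - L ^ t‖ + ‖ΔL‖ * ‖L ^ t‖ :=
            add_le_add (norm_mul_le _ _) (norm_mul_le _ _)
        _ ≤ r * ((t : ℝ) * r ^ (t - 1) * ‖ΔL‖) + ‖ΔL‖ * r ^ t := by
            apply add_le_add
            · exact mul_le_mul hLΔ ih (norm_nonneg _) hr0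
            · exact mul_le_mul_of_nonneg_left (hLt t) hc
        _ ≤ (↑(t + 1) : ℝ) * r ^ (t + 1 - 1) * ‖ΔL‖ := by
            simp only [Nat.add_sub_cancel]
            push_cast
            have : r * ((t : ℝ) * r ^ (t - 1) * ‖ΔL‖) = ((t : ℝ) * r ^ (t - 1) * r) * ‖ΔL‖ := by
              ring
            rw [this]
            nlinarith [mul_le_mul_of_nonneg_right hstep hc]
  -- sum of the majorant
  have hgeo : HasSum (fun k : ℕ => ((k : ℝ) + 1) * r ^ k * ‖ΔL‖)
      ((r / (1 - r) ^ 2 + (1 - r)⁻¹) * ‖ΔL‖) := by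
    have h1 := (hasSum_coe_mul_geometric_of_norm_lt_one (r := r)
      (by rwa [Real.norm_eq_abs, abs_of_nonneg hr0])).add
      (hasSum_geometric_of_lt_one hr0 hr1)
    have h2 := h1.mul_right ‖ΔL‖
    convert h2 using 2 with k
    · rfl
    ring
  have hkey : HasSum (fun t : ℕ => (t : ℝ) * r ^ (t - 1) * ‖ΔL‖)
      ((r / (1 - r) ^ 2 + (1 - r)⁻¹) * ‖ΔL‖) := by
    rw [← hasSum_nat_add_iff' 1]
    convert hgeo using 1
    · rfl
    · funext k
      simp only [Nat.add_sub_cancel]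
      push_cast
      ring
    · rw [Finset.sum_range_one, Nat.cast_zero, zero_mul, zero_mul, sub_zero]
  have hval : (r / (1 - r) ^ 2 + (1 - r)⁻¹) * ‖ΔL‖ = γ ^ (-2 : ℤ) * ‖ΔL‖ := by
    have hγ : (1 : ℝ) - r = γ := by simp [hrdef]
    rw [hγ]
    have h2 : γ ^ (-2 : ℤ) = (γ ^ 2)⁻¹ := by
      rw [zpow_neg, zpow_two, sq]
    have : r / γ ^ 2 + γ⁻¹ = (γ ^ 2)⁻¹ := by
      rw [hrdef]
      field_simp
      ring
    rw [this, h2]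
  have hsum : Summable (fun t : ℕ => ‖A ^ t - L ^ t‖) :=
    Summable.of_nonneg_of_le (fun t => norm_nonneg _) key hkey.summable
  refine ⟨hsum, ?_⟩
  calc ∑' t : ℕ, ‖A ^ t - L ^ t‖ ≤ ∑' t : ℕ, (t : ℝ) * r ^ (t - 1) * ‖ΔL‖ :=
        Summable.tsum_le_tsum key hsum hkey.summable
    _ = γ ^ (-2 : ℤ) * ‖ΔL‖ := by rw [hkey.tsum_eq, hval]
end

section
/- If K is (κ,γ)-strongly stable for (A,B) (i.e., A−BK = QLQ^(−1) with ‖L‖ ≤ 1−γ and ‖A‖,‖B‖,‖K‖,‖Q‖,‖Q^(−1)‖ ≤ κ) and ‖A−Â‖, ‖B−B̂‖ ≤ ε with ε ≤ γ/(4κ³), then K is (κ+ε, γ/2)-strongly stable for (Â,B̂): there is a decomposition Â−B̂K = Q L̂ Q^(−1) with ‖L̂‖ ≤ 1 − γ/2 and ‖Â‖,‖B̂‖ ≤ κ+ε. -/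
/-- If `K` is `(κ,γ)`-strongly stable for `(A,B)`, i.e.
`A - B K = Q L Q⁻¹` with `‖L‖ ≤ 1-γ` and `‖A‖,‖B‖,‖K‖,‖Q‖,‖Q⁻¹‖ ≤ κ`,
and `‖A - Â‖, ‖B - B̂‖ ≤ ε ≤ γ/(4κ³)`, then `K` is `(κ+ε, γ/2)`-strongly
stable for `(Â, B̂)` with the same transforming matrix `Q`. -/
theorem stmt6 (m n : ℕ) (κ γ ε : ℝ) (hκ : 1 ≤ κ) (hγ0 : 0 < γ) (hγ1 : γ < 1)
    (hε0 : 0 ≤ ε) (hε : ε ≤ γ / (4 * κ ^ 3))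
    (A Ahat Q Qinv L : EuclideanSpace ℝ (Fin m) →L[ℝ] EuclideanSpace ℝ (Fin m))
    (B Bhat : EuclideanSpace ℝ (Fin n) →L[ℝ] EuclideanSpace ℝ (Fin m))
    (K : EuclideanSpace ℝ (Fin m) →L[ℝ] EuclideanSpace ℝ (Fin n))
    (hQ : Q ∘L Qinv = ContinuousLinearMap.id ℝ _)
    (hQ' : Qinv ∘L Q = ContinuousLinearMap.id ℝ _)
    (hdecomp : A - B ∘L K = Q ∘L L ∘L Qinv)
    (hL : ‖L‖ ≤ 1 - γ)
    (hnA : ‖A‖ ≤ κ) (hnB : ‖B‖ ≤ κ) (hnK : ‖K‖ ≤ κ) (hnQ : ‖Q‖ ≤ κ) (hnQinv : ‖Qinv‖ ≤ κ)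
    (hA : ‖A - Ahat‖ ≤ ε) (hB : ‖B - Bhat‖ ≤ ε) :
    ∃ Lhat : EuclideanSpace ℝ (Fin m) →L[ℝ] EuclideanSpace ℝ (Fin m),
      Ahat - Bhat ∘L K = Q ∘L Lhat ∘L Qinv ∧ ‖Lhat‖ ≤ 1 - γ / 2 ∧
        ‖Ahat‖ ≤ κ + ε ∧ ‖Bhat‖ ≤ κ + ε := by
  have hκ0 : (0:ℝ) < κ := lt_of_lt_of_le one_pos hκ
  set E := (Ahat - A) - (Bhat - B) ∘L K with hE
  refine ⟨L + Qinv ∘L E ∘L Q, ?_, ?_, ?_, ?_⟩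
  · have h1 : Q ∘L (L + Qinv ∘L E ∘L Q) ∘L Qinv
        = Q ∘L L ∘L Qinv + (Q ∘L Qinv) ∘L E ∘L (Q ∘L Qinv) := by
      simp only [ContinuousLinearMap.comp_add, ContinuousLinearMap.add_comp,
        ContinuousLinearMap.comp_assoc]
    rw [h1, hQ, ← hdecomp]
    simp only [ContinuousLinearMap.id_comp, ContinuousLinearMap.comp_id, hE,
      ContinuousLinearMap.sub_comp]
    abel
  · have hEn : ‖E‖ ≤ ε + ε * κ := by
      calc ‖E‖ ≤ ‖Ahat - A‖ + ‖(Bhat - B) ∘L K‖ := norm_sub_le _ _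
        _ ≤ ε + ε * κ := by
            have h1 : ‖Ahat - A‖ ≤ ε := by rwa [← norm_neg, neg_sub]
            have h2 : ‖(Bhat - B) ∘L K‖ ≤ ε * κ := by
              calc ‖(Bhat - B) ∘L K‖ ≤ ‖Bhat - B‖ * ‖K‖ :=
                    ContinuousLinearMap.opNorm_comp_le _ _
                _ ≤ ε * κ := by
                    have : ‖Bhat - B‖ ≤ ε := by rwa [← norm_neg, neg_sub]
                    exact mul_le_mul this hnK (norm_nonneg _) hε0
            linarith
    have hQEQ : ‖Qinv ∘L E ∘L Q‖ ≤ κ * ((ε + ε * κ) * κ) := by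
      calc ‖Qinv ∘L E ∘L Q‖ ≤ ‖Qinv‖ * ‖E ∘L Q‖ := ContinuousLinearMap.opNorm_comp_le _ _
        _ ≤ κ * ((ε + ε * κ) * κ) := by
            have h3 : ‖E ∘L Q‖ ≤ (ε + ε * κ) * κ := by
              calc ‖E ∘L Q‖ ≤ ‖E‖ * ‖Q‖ := ContinuousLinearMap.opNorm_comp_le _ _
                _ ≤ (ε + ε * κ) * κ :=
                    mul_le_mul hEn hnQ (norm_nonneg _) (by positivity)
            exact mul_le_mul hnQinv h3 (norm_nonneg _) (le_of_lt hκ0)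
    have hεκ : ε * (4 * κ ^ 3) ≤ γ := (le_div_iff₀ (by positivity)).mp hε
    have : ‖L + Qinv ∘L E ∘L Q‖ ≤ ‖L‖ + ‖Qinv ∘L E ∘L Q‖ := norm_add_le _ _
    have hb : κ * ((ε + ε * κ) * κ) ≤ γ / 2 := by nlinarith [sq_nonneg κ, sq_nonneg (κ-1)]
    linarith
  · calc ‖Ahat‖ = ‖A - (A - Ahat)‖ := by congr 1; abel
      _ ≤ ‖A‖ + ‖A - Ahat‖ := norm_sub_le _ _
      _ ≤ κ + ε := add_le_add hnA hA
  · calc ‖Bhat‖ = ‖B - (B - Bhat)‖ := by congr 1; abel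
      _ ≤ ‖B‖ + ‖B - Bhat‖ := norm_sub_le _ _
      _ ≤ κ + ε := add_le_add hnB hB
end

section
/- Let x_{t+1} = ∑_{i=0}^{t} M^i w_{t−i} and x̂_{t+1} = ∑_{i=0}^{t} M̂^i ŵ_{t−i}, where ‖M‖, ‖M̂‖ ≤ 1−γ, ‖w_s‖ ≤ W for all s, ‖ŵ_s − w_s‖ ≤ ε_w for all s ≥ 1, and ‖ŵ_0‖ ≤ W₀ with W ≤ W₀. Then ‖x_{t+1} − x̂_{t+1}‖ ≤ (1−γ)^t·(W+W₀) + γ^(−1)·ε_w + γ^(−2)·W₀·‖M − M̂‖. -/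
open Finset

section Aux
variable {E : Type*} [NormedAddCommGroup E] [NormedSpace ℝ E]

lemma aux_pow_norm_le (A : E →L[ℝ] E) (x : ℝ) (hA : ‖A‖ ≤ x) :
    ∀ n : ℕ, ‖A ^ n‖ ≤ x ^ n := by
  intro n
  induction n with
  | zero => rw [pow_zero, pow_zero]; exact ContinuousLinearMap.norm_id_le
  | succ k ih =>
    have hx0 : 0 ≤ x := le_trans (norm_nonneg A) hA
    calc ‖A ^ (k+1)‖ = ‖A * A ^ k‖ := by rw [pow_succ']
      _ ≤ ‖A‖ * ‖A ^ k‖ := norm_mul_le _ _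
      _ ≤ x * x ^ k := by
          apply mul_le_mul hA ih (norm_nonneg _) hx0
      _ = x ^ (k+1) := by rw [pow_succ']

lemma aux_pow_diff (M Mhat : E →L[ℝ] E) (x : ℝ)
    (hM : ‖M‖ ≤ x) (hMhat : ‖Mhat‖ ≤ x) :
    ∀ i : ℕ, ‖M ^ i - Mhat ^ i‖ ≤ i * x ^ (i - 1) * ‖M - Mhat‖ := by
  intro i
  have hx0 : 0 ≤ x := le_trans (norm_nonneg M) hM
  induction i with
  | zero => simp
  | succ n ih =>
    have h1 : M ^ (n+1) - Mhat ^ (n+1)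
        = M * (M ^ n - Mhat ^ n) + (M - Mhat) * Mhat ^ n := by
      rw [pow_succ', pow_succ']; noncomm_ring
    rw [h1]
    have e1 : ‖M * (M ^ n - Mhat ^ n)‖ ≤ x * (n * x ^ (n-1) * ‖M - Mhat‖) :=
      le_trans (norm_mul_le _ _) (mul_le_mul hM ih (norm_nonneg _) hx0)
    have e2 : ‖(M - Mhat) * Mhat ^ n‖ ≤ ‖M - Mhat‖ * x ^ n :=
      le_trans (norm_mul_le _ _)
        (mul_le_mul_of_nonneg_left (aux_pow_norm_le Mhat x hMhat n) (norm_nonneg _))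
    have e3 : x * ((n:ℝ) * x ^ (n-1) * ‖M - Mhat‖) + ‖M - Mhat‖ * x ^ n
        ≤ ((n:ℝ) + 1) * x ^ n * ‖M - Mhat‖ := by
      rcases Nat.eq_zero_or_pos n with h | h
      · subst h; simp
      · have hx : x * x ^ (n - 1) = x ^ n := by
          rw [← pow_succ']; congr 1; omega
        calc x * ((n:ℝ) * x ^ (n-1) * ‖M - Mhat‖) + ‖M - Mhat‖ * x ^ n
            = (n:ℝ) * (x * x ^ (n-1)) * ‖M - Mhat‖ + ‖M - Mhat‖ * x ^ n := by ring
          _ = (n:ℝ) * x ^ n * ‖M - Mhat‖ + ‖M - Mhat‖ * x ^ n := by rw [hx]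
          _ = ((n:ℝ) + 1) * x ^ n * ‖M - Mhat‖ := by ring
          _ ≤ ((n:ℝ) + 1) * x ^ n * ‖M - Mhat‖ := le_refl _
    calc ‖M * (M ^ n - Mhat ^ n) + (M - Mhat) * Mhat ^ n‖
        ≤ ‖M * (M ^ n - Mhat ^ n)‖ + ‖(M - Mhat) * Mhat ^ n‖ := norm_add_le _ _
      _ ≤ x * ((n:ℝ) * x ^ (n-1) * ‖M - Mhat‖) + ‖M - Mhat‖ * x ^ n := add_le_add e1 e2
      _ ≤ ((n:ℝ) + 1) * x ^ n * ‖M - Mhat‖ := e3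
      _ = (↑(n+1) : ℝ) * x ^ ((n+1) - 1) * ‖M - Mhat‖ := by push_cast; simp

end Aux

lemma aux_geom_sum (x : ℝ) (hx0 : 0 ≤ x) (hx1 : x < 1) (n : ℕ) :
    ∑ i ∈ range n, x ^ i ≤ (1 - x)⁻¹ := by
  have h := tsum_geometric_of_lt_one hx0 hx1
  refine le_trans (Summable.sum_le_tsum (range n) (fun i _ => pow_nonneg hx0 i) ?_) h.le
  exact summable_geometric_of_lt_one hx0 hx1

lemma aux_deriv_sum (x : ℝ) (hx0 : 0 ≤ x) (hx1 : x < 1) (n : ℕ) :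
    ∑ i ∈ range n, (i : ℝ) * x ^ (i - 1) ≤ ((1 - x)⁻¹) ^ 2 := by
  have hxn : ‖x‖ < 1 := by rw [Real.norm_eq_abs, abs_of_nonneg hx0]; exact hx1
  have h1 : HasSum (fun j : ℕ => (j : ℝ) * x ^ j) (x / (1 - x) ^ 2) :=
    hasSum_coe_mul_geometric_of_norm_lt_one hxn
  have h2 : HasSum (fun j : ℕ => x ^ j) ((1 - x)⁻¹) :=
    hasSum_geometric_of_lt_one hx0 hx1
  have h3 : HasSum (fun j : ℕ => ((j : ℝ) + 1) * x ^ j) (((1 - x)⁻¹) ^ 2) := by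
    have := h1.add h2
    convert this using 2 with j
    · ring
    · have hne : (1 : ℝ) - x ≠ 0 := by linarith
      field_simp
      ring
  cases n with
  | zero => simp [sq_nonneg]
  | succ k =>
    have hre : ∑ i ∈ range (k+1), (i : ℝ) * x ^ (i - 1)
        = ∑ j ∈ range k, ((j : ℝ) + 1) * x ^ j := by
      rw [Finset.sum_range_succ']
      simp [Nat.add_sub_cancel]
    rw [hre]
    refine le_trans (Summable.sum_le_tsum (range k) (fun i _ => ?_) h3.summable) h3.tsum_eq.le
    positivity


/-- With `x_{t+1} = ∑_{i=0}^t M^i w_{t-i}` and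
`x̂_{t+1} = ∑_{i=0}^t M̂^i ŵ_{t-i}`, where `‖M‖, ‖M̂‖ ≤ 1-γ`, `‖w_s‖ ≤ W`,
`‖ŵ_s - w_s‖ ≤ ε_w` for `s ≥ 1`, and `‖ŵ_0‖ ≤ W₀` with `W ≤ W₀`, one has
`‖x_{t+1} - x̂_{t+1}‖ ≤ (1-γ)^t (W + W₀) + γ⁻¹ ε_w + γ⁻² W₀ ‖M - M̂‖`. -/
theorem stmt9 (m : ℕ) (γ W W₀ εw : ℝ) (hγ0 : 0 < γ) (hγ1 : γ < 1)
    (hW0 : 0 ≤ W) (hWW0 : W ≤ W₀) (hεw : 0 ≤ εw)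
    (M Mhat : EuclideanSpace ℝ (Fin m) →L[ℝ] EuclideanSpace ℝ (Fin m))
    (w what : ℕ → EuclideanSpace ℝ (Fin m))
    (hM : ‖M‖ ≤ 1 - γ) (hMhat : ‖Mhat‖ ≤ 1 - γ)
    (hw : ∀ s, ‖w s‖ ≤ W)
    (hwhat : ∀ s, 1 ≤ s → ‖what s - w s‖ ≤ εw)
    (hwhat0 : ‖what 0‖ ≤ W₀) (t : ℕ) :
    ‖(∑ i ∈ Finset.range (t + 1), (M ^ i) (w (t - i))) -
        ∑ i ∈ Finset.range (t + 1), (Mhat ^ i) (what (t - i))‖ ≤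
      (1 - γ) ^ t * (W + W₀) + γ⁻¹ * εw + γ ^ (-2 : ℤ) * W₀ * ‖M - Mhat‖ := by
  set x : ℝ := 1 - γ with hxdef
  have hx0 : 0 ≤ x := by simp only [hxdef]; linarith
  have hx1 : x < 1 := by simp only [hxdef]; linarith
  have hW₀ : 0 ≤ W₀ := le_trans hW0 hWW0
  have hr : 0 ≤ ‖M - Mhat‖ := norm_nonneg _
  have key : (∑ i ∈ Finset.range (t + 1), (M ^ i) (w (t - i))) -
      ∑ i ∈ Finset.range (t + 1), (Mhat ^ i) (what (t - i)) =
      (∑ i ∈ Finset.range (t + 1), (M ^ i - Mhat ^ i) (w (t - i))) +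
      ∑ i ∈ Finset.range (t + 1), (Mhat ^ i) (w (t - i) - what (t - i)) := by
    rw [← Finset.sum_add_distrib, ← Finset.sum_sub_distrib]
    refine Finset.sum_congr rfl fun i _ => ?_
    simp only [ContinuousLinearMap.sub_apply, map_sub]
    abel
  rw [key]
  -- bound the first sum
  have hS1 : ‖∑ i ∈ Finset.range (t + 1), (M ^ i - Mhat ^ i) (w (t - i))‖ ≤
      γ ^ (-2 : ℤ) * W₀ * ‖M - Mhat‖ := by
    have step : ∀ i ∈ Finset.range (t + 1),
        ‖(M ^ i - Mhat ^ i) (w (t - i))‖ ≤ ((i : ℝ) * x ^ (i - 1)) * (‖M - Mhat‖ * W₀) := by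
      intro i _
      calc ‖(M ^ i - Mhat ^ i) (w (t - i))‖ ≤ ‖M ^ i - Mhat ^ i‖ * ‖w (t - i)‖ :=
            ContinuousLinearMap.le_opNorm _ _
        _ ≤ ((i : ℝ) * x ^ (i - 1) * ‖M - Mhat‖) * W₀ := by
            apply mul_le_mul (aux_pow_diff M Mhat x hM hMhat i)
              (le_trans (hw _) hWW0) (norm_nonneg _)
            positivity
        _ = ((i : ℝ) * x ^ (i - 1)) * (‖M - Mhat‖ * W₀) := by ring
    calc ‖∑ i ∈ Finset.range (t + 1), (M ^ i - Mhat ^ i) (w (t - i))‖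
        ≤ ∑ i ∈ Finset.range (t + 1), ‖(M ^ i - Mhat ^ i) (w (t - i))‖ :=
          norm_sum_le _ _
      _ ≤ ∑ i ∈ Finset.range (t + 1), ((i : ℝ) * x ^ (i - 1)) * (‖M - Mhat‖ * W₀) :=
          Finset.sum_le_sum step
      _ = (∑ i ∈ Finset.range (t + 1), (i : ℝ) * x ^ (i - 1)) * (‖M - Mhat‖ * W₀) :=
          (Finset.sum_mul _ _ _).symm
      _ ≤ ((1 - x)⁻¹) ^ 2 * (‖M - Mhat‖ * W₀) := by
          apply mul_le_mul_of_nonneg_right (aux_deriv_sum x hx0 hx1 _)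
          positivity
      _ = γ ^ (-2 : ℤ) * W₀ * ‖M - Mhat‖ := by
          have h1 : (1 : ℝ) - x = γ := by simp [hxdef]
          have h2 : γ ^ (-2 : ℤ) = (γ⁻¹) ^ 2 := by
            rw [zpow_neg, inv_pow]; norm_cast
          rw [h1, h2]; ring
  -- bound the second sum
  have hterm : ∀ i ∈ Finset.range t,
      ‖(Mhat ^ i) (w (t - i) - what (t - i))‖ ≤ x ^ i * εw := by
    intro i hi
    have hi' : 1 ≤ t - i := by
      have := Finset.mem_range.mp hi; omega
    calc ‖(Mhat ^ i) (w (t - i) - what (t - i))‖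
        ≤ ‖Mhat ^ i‖ * ‖w (t - i) - what (t - i)‖ := ContinuousLinearMap.le_opNorm _ _
      _ ≤ x ^ i * εw := by
          apply mul_le_mul (aux_pow_norm_le Mhat x hMhat i) ?_ (norm_nonneg _)
            (pow_nonneg hx0 i)
          rw [norm_sub_rev]; exact hwhat _ hi'
  have hS2 : ‖∑ i ∈ Finset.range (t + 1), (Mhat ^ i) (w (t - i) - what (t - i))‖ ≤
      γ⁻¹ * εw + x ^ t * (W + W₀) := by
    rw [Finset.sum_range_succ]
    calc ‖(∑ i ∈ Finset.range t, (Mhat ^ i) (w (t - i) - what (t - i))) +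
          (Mhat ^ t) (w (t - t) - what (t - t))‖
        ≤ ‖∑ i ∈ Finset.range t, (Mhat ^ i) (w (t - i) - what (t - i))‖ +
          ‖(Mhat ^ t) (w (t - t) - what (t - t))‖ := norm_add_le _ _
      _ ≤ (∑ i ∈ Finset.range t, x ^ i * εw) + x ^ t * (W + W₀) := by
          apply add_le_add
          · exact le_trans (norm_sum_le _ _) (Finset.sum_le_sum hterm)
          · simp only [Nat.sub_self]
            calc ‖(Mhat ^ t) (w 0 - what 0)‖ ≤ ‖Mhat ^ t‖ * ‖w 0 - what 0‖ :=
                  ContinuousLinearMap.le_opNorm _ _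
              _ ≤ x ^ t * (W + W₀) := by
                  apply mul_le_mul (aux_pow_norm_le Mhat x hMhat t) ?_ (norm_nonneg _)
                    (pow_nonneg hx0 t)
                  exact le_trans (norm_sub_le _ _) (add_le_add (hw 0) hwhat0)
      _ ≤ γ⁻¹ * εw + x ^ t * (W + W₀) := by
          apply add_le_add_left
          rw [← Finset.sum_mul]
          have h := aux_geom_sum x hx0 hx1 t
          have : (1 : ℝ) - x = γ := by simp [hxdef]
          rw [this] at h
          exact mul_le_mul_of_nonneg_right h hεw
  calc ‖(∑ i ∈ Finset.range (t + 1), (M ^ i - Mhat ^ i) (w (t - i))) +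
        ∑ i ∈ Finset.range (t + 1), (Mhat ^ i) (w (t - i) - what (t - i))‖
      ≤ ‖∑ i ∈ Finset.range (t + 1), (M ^ i - Mhat ^ i) (w (t - i))‖ +
        ‖∑ i ∈ Finset.range (t + 1), (Mhat ^ i) (w (t - i) - what (t - i))‖ :=
        norm_add_le _ _
    _ ≤ γ ^ (-2 : ℤ) * W₀ * ‖M - Mhat‖ + (γ⁻¹ * εw + x ^ t * (W + W₀)) :=
        add_le_add hS1 hS2
    _ = (1 - γ) ^ t * (W + W₀) + γ⁻¹ * εw + γ ^ (-2 : ℤ) * W₀ * ‖M - Mhat‖ := by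
        simp only [hxdef]; ring
end
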